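/- arXiv:1709.04212 — 4 statements merged into one kernel-verified Lean document; each statement's English description precedes it below -/
import Mathlib

section
/- Let (xᵢ)ᵢ₌₁^M, (aᵢ)ᵢ₌₁^M, (yⱼ)ⱼ₌₁^N, (bⱼ)ⱼ₌₁^N be real numbers all bounded away from 0 (contained in compact sets not containing 0), and define f_{ij} = xᵢyⱼ - aᵢbⱼ. Then there exist positive constants c, D such that c·(Σⱼ₌₂^N f_{1j}² + Σᵢ₌₂^M f_{i1}² + f_{11}²) ≤ Σᵢ₌₁^M Σⱼ₌₁^N f_{ij}² ≤ D·(Σⱼ₌₂^N f_{1j}² + Σᵢ₌₂^M f_{i1}² + f_{11}²). -/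
/-!
Every entry is controlled by the first row and column through the identity
`x₁y₁ fᵢⱼ = xᵢy₁ f₁ⱼ + a₁bⱼ fᵢ₁ - aᵢbⱼ f₁₁`: as `|x₁y₁| ≥ δ²` and the coefficients are at most `R²`
in absolute value, `fᵢⱼ² ≤ 3R⁴/δ⁴ (f₁ⱼ² + fᵢ₁² + f₁₁²)`, and summing over all `i, j` gives the
upper bound. The lower bound holds with `c = 1`, the corner terms being part of the full sum.
-/

open Finset

lemma sq_le_of_mul_eq_add_add {m K u t A B C p q r : ℝ} (hm : 0 < m) (hu : m ≤ |u|)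
    (hA : |A| ≤ K) (hB : |B| ≤ K) (hC : |C| ≤ K) (h : u * t = A * p + B * q + C * r) :
    t ^ 2 ≤ 3 * K ^ 2 / m ^ 2 * (p ^ 2 + q ^ 2 + r ^ 2) := by
  have hsq {s : ℝ} (hs : |s| ≤ K) : s ^ 2 ≤ K ^ 2 := sq_le_sq' (abs_le.1 hs).1 (abs_le.1 hs).2
  rw [div_mul_eq_mul_div, le_div_iff₀ (by positivity)]
  have hu2 : m ^ 2 ≤ u ^ 2 := by rw [← sq_abs u]; gcongr
  calc t ^ 2 * m ^ 2 ≤ t ^ 2 * u ^ 2 := mul_le_mul_of_nonneg_left hu2 (sq_nonneg t)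
    _ = (u * t) ^ 2 := by ring
    _ = (A * p + B * q + C * r) ^ 2 := by rw [h]
    _ ≤ 3 * (A ^ 2 * p ^ 2 + B ^ 2 * q ^ 2 + C ^ 2 * r ^ 2) := by
        nlinarith [sq_nonneg (A * p - B * q), sq_nonneg (A * p - C * r), sq_nonneg (B * q - C * r)]
    _ ≤ 3 * K ^ 2 * (p ^ 2 + q ^ 2 + r ^ 2) := by
        have := hsq hA; have := hsq hB; have := hsq hC
        nlinarith [sq_nonneg p, sq_nonneg q, sq_nonneg r]

lemma abs_mul_le_sq {s t R : ℝ} (hs : |s| ≤ R) (ht : |t| ≤ R) : |s * t| ≤ R ^ 2 := by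
  rw [abs_mul, sq]
  exact mul_le_mul hs ht (abs_nonneg t) ((abs_nonneg s).trans hs)

lemma sq_le_abs_mul {s t δ : ℝ} (hδ : 0 ≤ δ) (hs : δ ≤ |s|) (ht : δ ≤ |t|) : δ ^ 2 ≤ |s * t| := by
  rw [abs_mul, sq]
  exact mul_le_mul hs ht hδ (abs_nonneg s)

lemma sq_sub_mul_le_corner {δ R x₁ y₁ a₁ b₁ x y a b : ℝ} (hδ : 0 < δ) (hx₁ : δ ≤ |x₁|)
    (hy₁ : δ ≤ |y₁|) (hx : |x| ≤ R) (hy₁' : |y₁| ≤ R) (ha₁ : |a₁| ≤ R) (ha : |a| ≤ R)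
    (hb : |b| ≤ R) :
    (x * y - a * b) ^ 2 ≤ 3 * R ^ 4 / δ ^ 4 *
      ((x₁ * y - a₁ * b) ^ 2 + (x * y₁ - a * b₁) ^ 2 + (x₁ * y₁ - a₁ * b₁) ^ 2) := by
  have hC : |-(a * b)| ≤ R ^ 2 := (abs_neg (a * b)).trans_le (abs_mul_le_sq ha hb)
  have key := sq_le_of_mul_eq_add_add (pow_pos hδ 2) (sq_le_abs_mul hδ.le hx₁ hy₁)
    (abs_mul_le_sq hx hy₁') (abs_mul_le_sq ha₁ hb) hC
    (show x₁ * y₁ * (x * y - a * b) = x * y₁ * (x₁ * y - a₁ * b) + a₁ * b * (x * y₁ - a * b₁)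
      + -(a * b) * (x₁ * y₁ - a₁ * b₁) by ring)
  simpa only [← pow_mul] using key

variable {ι κ : Type*} [Fintype ι] [Fintype κ] [DecidableEq ι] [DecidableEq κ]

def crossSum (F : ι → κ → ℝ) (i₀ : ι) (j₀ : κ) : ℝ :=
  (∑ j ∈ univ.filter (fun j => j ≠ j₀), F i₀ j) + (∑ i ∈ univ.filter (fun i => i ≠ i₀), F i j₀)
    + F i₀ j₀

lemma crossSum_eq (F : ι → κ → ℝ) (i₀ : ι) (j₀ : κ) :
    crossSum F i₀ j₀ = ∑ j, F i₀ j + ∑ i ∈ univ.erase i₀, F i j₀ := by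
  rw [crossSum, filter_ne', filter_ne', ← add_sum_erase univ _ (mem_univ j₀)]
  ring

variable {F : ι → κ → ℝ}

lemma crossSum_le_sum (hF : ∀ i j, 0 ≤ F i j) (i₀ : ι) (j₀ : κ) :
    crossSum F i₀ j₀ ≤ ∑ i, ∑ j, F i j := by
  rw [crossSum_eq, ← add_sum_erase univ _ (mem_univ i₀)]
  gcongr with i
  exact single_le_sum (fun j _ => hF i j) (mem_univ j₀)

lemma le_crossSum_row (hF : ∀ i j, 0 ≤ F i j) (i₀ : ι) (j₀ : κ) (j : κ) :
    F i₀ j ≤ crossSum F i₀ j₀ := by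
  rw [crossSum_eq]
  have := single_le_sum (fun j _ => hF i₀ j) (mem_univ j)
  have := sum_nonneg fun i (_ : i ∈ univ.erase i₀) => hF i j₀
  linarith

lemma le_crossSum_col (hF : ∀ i j, 0 ≤ F i j) (i₀ : ι) (j₀ : κ) (i : ι) :
    F i j₀ ≤ crossSum F i₀ j₀ := by
  rcases eq_or_ne i i₀ with rfl | hi
  · exact le_crossSum_row hF i j₀ j₀
  rw [crossSum_eq]
  have := single_le_sum (fun i _ => hF i j₀) (mem_erase.2 ⟨hi, mem_univ i⟩)
  have := sum_nonneg fun j (_ : j ∈ univ) => hF i₀ j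
  linarith

lemma sum_le_mul_crossSum {K : ℝ} (hK : 0 ≤ K) (hF : ∀ i j, 0 ≤ F i j) (i₀ : ι) (j₀ : κ)
    (hbound : ∀ i j, F i j ≤ K * (F i₀ j + F i j₀ + F i₀ j₀)) :
    ∑ i, ∑ j, F i j ≤ Fintype.card ι * Fintype.card κ * (3 * K) * crossSum F i₀ j₀ := by
  have hentry (i : ι) (j : κ) : F i j ≤ 3 * K * crossSum F i₀ j₀ := by
    have := le_crossSum_row hF i₀ j₀ j
    have := le_crossSum_col hF i₀ j₀ i
    have := le_crossSum_row hF i₀ j₀ j₀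
    calc F i j ≤ K * (F i₀ j + F i j₀ + F i₀ j₀) := hbound i j
      _ ≤ K * (3 * crossSum F i₀ j₀) := by gcongr; linarith
      _ = 3 * K * crossSum F i₀ j₀ := by ring
  calc ∑ i, ∑ j, F i j ≤ ∑ _i : ι, ∑ _j : κ, 3 * K * crossSum F i₀ j₀ := by
        gcongr with i _ j; exact hentry i j
    _ = _ := by simp only [sum_const, card_univ, nsmul_eq_mul]; ring

theorem nmf_corner_equiv (M N : ℕ) (hM : 1 ≤ M) (hN : 1 ≤ N) (δ R : ℝ) (hδ : 0 < δ) (hR : δ ≤ R) :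
    ∃ c D : ℝ, 0 < c ∧ 0 < D ∧
      ∀ (x a : Fin M → ℝ) (y b : Fin N → ℝ),
        (∀ i, δ ≤ |x i| ∧ |x i| ≤ R) → (∀ i, δ ≤ |a i| ∧ |a i| ≤ R) →
        (∀ j, δ ≤ |y j| ∧ |y j| ≤ R) → (∀ j, δ ≤ |b j| ∧ |b j| ≤ R) →
        c * ((∑ j ∈ Finset.univ.filter (fun j : Fin N => j ≠ ⟨0, hN⟩),
                (x ⟨0, hM⟩ * y j - a ⟨0, hM⟩ * b j) ^ 2) +
             (∑ i ∈ Finset.univ.filter (fun i : Fin M => i ≠ ⟨0, hM⟩),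
                (x i * y ⟨0, hN⟩ - a i * b ⟨0, hN⟩) ^ 2) +
             (x ⟨0, hM⟩ * y ⟨0, hN⟩ - a ⟨0, hM⟩ * b ⟨0, hN⟩) ^ 2)
          ≤ ∑ i : Fin M, ∑ j : Fin N, (x i * y j - a i * b j) ^ 2 ∧
        (∑ i : Fin M, ∑ j : Fin N, (x i * y j - a i * b j) ^ 2)
          ≤ D * ((∑ j ∈ Finset.univ.filter (fun j : Fin N => j ≠ ⟨0, hN⟩),
                (x ⟨0, hM⟩ * y j - a ⟨0, hM⟩ * b j) ^ 2) +
             (∑ i ∈ Finset.univ.filter (fun i : Fin M => i ≠ ⟨0, hM⟩),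
                (x i * y ⟨0, hN⟩ - a i * b ⟨0, hN⟩) ^ 2) +
             (x ⟨0, hM⟩ * y ⟨0, hN⟩ - a ⟨0, hM⟩ * b ⟨0, hN⟩) ^ 2) := by
  have hR₀ : 0 < R := hδ.trans_le hR
  refine ⟨1, M * N * (3 * (3 * R ^ 4 / δ ^ 4)), one_pos, by positivity,
    fun x a y b hx ha hy hb => ?_⟩
  set F : Fin M → Fin N → ℝ := fun i j => (x i * y j - a i * b j) ^ 2
  have hF (i : Fin M) (j : Fin N) : 0 ≤ F i j := sq_nonneg _
  have hbound (i : Fin M) (j : Fin N) :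
      F i j ≤ 3 * R ^ 4 / δ ^ 4 * (F ⟨0, hM⟩ j + F i ⟨0, hN⟩ + F ⟨0, hM⟩ ⟨0, hN⟩) :=
    sq_sub_mul_le_corner hδ (hx _).1 (hy _).1 (hx i).2 (hy _).2 (ha _).2 (ha i).2 (hb j).2
  refine ⟨(one_mul _).trans_le (crossSum_le_sum hF _ _), ?_⟩
  simpa only [Fintype.card_fin, crossSum] using sum_le_mul_crossSum (by positivity) hF _ _ hbound
end

section
/- Let xᵢ, yⱼ, aᵢ, bⱼ be real numbers bounded away from 0, and f_{ij} = xᵢyⱼ - aᵢbⱼ. Then for all i ≥ 2, j ≥ 2 there exists a constant C > 0 (depending only on the bounds) such that f_{ij}² ≤ C·(f_{i(j-1)}² + f_{(i-1)j}² + f_{(i-1)(j-1)}²). -/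
/-!
Clearing the factor `x₁ y₁` exhibits `f₂₂` as a combination of its three neighbours:
`x₁ y₁ f₂₂ = x₁ y₂ f₂₁ + a₂ b₁ f₁₂ - a₂ b₂ f₁₁`.
The coefficients on the right are at most `R²` in absolute value and `|x₁ y₁| ≥ δ²`,
so Cauchy–Schwarz for three terms gives the bound with `C = 3 R⁴ / δ⁴`.
-/

theorem mul_mul_sub_mul_eq {α : Type*} [CommRing α] (x₁ x₂ y₁ y₂ a₁ a₂ b₁ b₂ : α) :
    x₁ * y₁ * (x₂ * y₂ - a₂ * b₂) =
      x₁ * y₂ * (x₂ * y₁ - a₂ * b₁) + a₂ * b₁ * (x₁ * y₂ - a₁ * b₂) -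
        a₂ * b₂ * (x₁ * y₁ - a₁ * b₁) := by
  ring

theorem sq_add_sub_le_three_mul (u v w : ℝ) :
    (u + v - w) ^ 2 ≤ 3 * (u ^ 2 + v ^ 2 + w ^ 2) := by
  nlinarith [sq_nonneg (u - v), sq_nonneg (u + w), sq_nonneg (v + w)]

theorem sq_mul_mul_le {R p q : ℝ} (hp : |p| ≤ R) (hq : |q| ≤ R) (f : ℝ) :
    (p * q * f) ^ 2 ≤ R ^ 4 * f ^ 2 := by
  have hpq : |p * q| ≤ R ^ 2 := by
    rw [abs_mul, sq]
    exact mul_le_mul hp hq (abs_nonneg q) ((abs_nonneg p).trans hp)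
  calc (p * q * f) ^ 2 = |p * q| ^ 2 * f ^ 2 := by rw [sq_abs, mul_pow]
    _ ≤ (R ^ 2) ^ 2 * f ^ 2 := by gcongr
    _ = R ^ 4 * f ^ 2 := by ring

theorem pow_four_le_sq_mul {δ x y : ℝ} (hδ : 0 ≤ δ) (hx : δ ≤ |x|) (hy : δ ≤ |y|) :
    δ ^ 4 ≤ (x * y) ^ 2 := by
  calc δ ^ 4 = (δ * δ) ^ 2 := by ring
    _ ≤ (|x| * |y|) ^ 2 := by gcongr
    _ = (x * y) ^ 2 := by rw [← abs_mul, sq_abs]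

theorem sq_mul_mul_sub_mul_le {R x₁ x₂ y₁ y₂ a₁ a₂ b₁ b₂ : ℝ}
    (hx₁ : |x₁| ≤ R) (hy₂ : |y₂| ≤ R) (ha₂ : |a₂| ≤ R) (hb₁ : |b₁| ≤ R) (hb₂ : |b₂| ≤ R) :
    (x₁ * y₁) ^ 2 * (x₂ * y₂ - a₂ * b₂) ^ 2 ≤
      3 * R ^ 4 * ((x₂ * y₁ - a₂ * b₁) ^ 2 + (x₁ * y₂ - a₁ * b₂) ^ 2 +
        (x₁ * y₁ - a₁ * b₁) ^ 2) := by
  rw [← mul_pow, mul_mul_sub_mul_eq x₁ x₂ y₁ y₂ a₁ a₂ b₁ b₂]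
  have hu := sq_mul_mul_le hx₁ hy₂ (x₂ * y₁ - a₂ * b₁)
  have hv := sq_mul_mul_le ha₂ hb₁ (x₁ * y₂ - a₁ * b₂)
  have hw := sq_mul_mul_le ha₂ hb₂ (x₁ * y₁ - a₁ * b₁)
  linarith [sq_add_sub_le_three_mul (x₁ * y₂ * (x₂ * y₁ - a₂ * b₁))
    (a₂ * b₁ * (x₁ * y₂ - a₁ * b₂)) (a₂ * b₂ * (x₁ * y₁ - a₁ * b₁))]

theorem nmf_step_bound (δ R : ℝ) (hδ : 0 < δ) (hR : δ ≤ R) :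
    ∃ C : ℝ, 0 < C ∧
      ∀ x₁ x₂ y₁ y₂ a₁ a₂ b₁ b₂ : ℝ,
        δ ≤ |x₁| → |x₁| ≤ R → δ ≤ |x₂| → |x₂| ≤ R →
        δ ≤ |y₁| → |y₁| ≤ R → δ ≤ |y₂| → |y₂| ≤ R →
        δ ≤ |a₁| → |a₁| ≤ R → δ ≤ |a₂| → |a₂| ≤ R →
        δ ≤ |b₁| → |b₁| ≤ R → δ ≤ |b₂| → |b₂| ≤ R →
        (x₂ * y₂ - a₂ * b₂) ^ 2 ≤
          C * ((x₂ * y₁ - a₂ * b₁) ^ 2 + (x₁ * y₂ - a₁ * b₂) ^ 2 +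
               (x₁ * y₁ - a₁ * b₁) ^ 2) := by
  have hR₀ : 0 < R := hδ.trans_le hR
  refine ⟨3 * R ^ 4 / δ ^ 4, by positivity, ?_⟩
  intro x₁ x₂ y₁ y₂ a₁ a₂ b₁ b₂ hx₁ hx₁' _ _ hy₁ _ _ hy₂' _ _ _ ha₂' _ hb₁' _ hb₂'
  have hlower := mul_le_mul_of_nonneg_right (pow_four_le_sq_mul hδ.le hx₁ hy₁)
    (sq_nonneg (x₂ * y₂ - a₂ * b₂))
  have hupper := sq_mul_mul_sub_mul_le (y₁ := y₁) (x₂ := x₂) (a₁ := a₁) hx₁' hy₂' ha₂' hb₁' hb₂'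
  rw [div_mul_eq_mul_div, le_div_iff₀ (by positivity)]
  linarith
end

section
/- In the ring ℝ[x₁,…,x_M, y₁,…,y_N, a₁,…,a_M, b₁,…,b_N] localized so that x₁ and y₁ are invertible (or working over the field of fractions), the ideal generated by all f_{ij} = xᵢyⱼ - aᵢbⱼ for 1 ≤ i ≤ M, 1 ≤ j ≤ N equals the ideal generated by f₁₁, f₂₁, …, f_{M1}, f₁₂, …, f_{1N}. -/
open MvPolynomial

/-!
With `f i j = x i * y j - a i * b j`, the identity
`x i₀ * y j₀ * f i j = x i * y j₀ * f i₀ j + a i₀ * b j * f i j₀ - a i * b j * f i₀ j₀`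
puts `x i₀ * y j₀ * f i j` in the ideal spanned by row `i₀` and column `j₀` of `f`;
once `x i₀ * y j₀` is invertible, `f i j` itself lies there.
-/

section RankOneDifference

variable {R ι κ : Type*} [CommRing R] (x a : ι → R) (y b : κ → R)

theorem mul_rankOneDifference_eq (i i₀ : ι) (j j₀ : κ) :
    x i₀ * y j₀ * (x i * y j - a i * b j) =
      x i * y j₀ * (x i₀ * y j - a i₀ * b j) + a i₀ * b j * (x i * y j₀ - a i * b j₀)
        - a i * b j * (x i₀ * y j₀ - a i₀ * b j₀) := by
  ring

theorem rankOneDifference_mem_span_of_isUnit {i₀ : ι} {j₀ : κ} (hu : IsUnit (x i₀ * y j₀))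
    (i : ι) (j : κ) :
    x i * y j - a i * b j ∈ Ideal.span (Set.range (fun i => x i * y j₀ - a i * b j₀) ∪
      Set.range (fun j => x i₀ * y j - a i₀ * b j)) := by
  set I := Ideal.span (Set.range (fun i => x i * y j₀ - a i * b j₀) ∪
    Set.range (fun j => x i₀ * y j - a i₀ * b j))
  have mem_col (i : ι) : x i * y j₀ - a i * b j₀ ∈ I :=
    Ideal.subset_span (Or.inl ⟨i, rfl⟩)
  have mem_row (j : κ) : x i₀ * y j - a i₀ * b j ∈ I :=
    Ideal.subset_span (Or.inr ⟨j, rfl⟩)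
  rw [← Ideal.unit_mul_mem_iff_mem I hu, mul_rankOneDifference_eq]
  exact I.sub_mem (I.add_mem (I.mul_mem_left _ (mem_row j)) (I.mul_mem_left _ (mem_col i)))
    (I.mul_mem_left _ (mem_col i₀))

theorem span_rankOneDifference_eq_of_isUnit {i₀ : ι} {j₀ : κ} (hu : IsUnit (x i₀ * y j₀)) :
    Ideal.span (Set.range (fun p : ι × κ => x p.1 * y p.2 - a p.1 * b p.2)) =
      Ideal.span (Set.range (fun i => x i * y j₀ - a i * b j₀) ∪
        Set.range (fun j => x i₀ * y j - a i₀ * b j)) := by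
  apply le_antisymm
  · rw [Ideal.span_le]
    rintro _ ⟨⟨i, j⟩, rfl⟩
    exact rankOneDifference_mem_span_of_isUnit x a y b hu i j
  · rw [Ideal.span_le]
    rintro _ (⟨i, rfl⟩ | ⟨j, rfl⟩)
    · exact Ideal.subset_span ⟨(i, j₀), rfl⟩
    · exact Ideal.subset_span ⟨(i₀, j), rfl⟩

end RankOneDifference

theorem nmf_ideal_localization (M N : ℕ) (hM : 1 ≤ M) (hN : 1 ≤ N) :
    let R := MvPolynomial (Fin M ⊕ Fin N ⊕ Fin M ⊕ Fin N) ℝ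
    let x : Fin M → R := fun i => X (Sum.inl i)
    let y : Fin N → R := fun j => X (Sum.inr (Sum.inl j))
    let a : Fin M → R := fun i => X (Sum.inr (Sum.inr (Sum.inl i)))
    let b : Fin N → R := fun j => X (Sum.inr (Sum.inr (Sum.inr j)))
    let f : Fin M → Fin N → R := fun i j => x i * y j - a i * b j
    let S : Submonoid R := Submonoid.powers (x ⟨0, hM⟩ * y ⟨0, hN⟩)
    let L := Localization S
    Ideal.span (Set.range (fun p : Fin M × Fin N => algebraMap R L (f p.1 p.2))) =
      Ideal.span (Set.range (fun i : Fin M => algebraMap R L (f i ⟨0, hN⟩)) ∪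
                  Set.range (fun j : Fin N => algebraMap R L (f ⟨0, hM⟩ j))) := by
  intro R x y a b f S L
  have hu : IsUnit (algebraMap R L (x ⟨0, hM⟩) * algebraMap R L (y ⟨0, hN⟩)) := by
    rw [← map_mul]
    exact IsLocalization.map_units L ⟨_, Submonoid.mem_powers _⟩
  simp only [f, map_sub, map_mul]
  exact span_rankOneDifference_eq_of_isUnit (algebraMap R L ∘ x) (algebraMap R L ∘ a)
    (algebraMap R L ∘ y) (algebraMap R L ∘ b) hu
end

section
/- Let M ≥ 2, N ≥ 2, H ≥ H₀ ≥ 1 be natural numbers, and let λ̄ = (1/2)[M - 1 + (H₀-1)(M+N-3) + (H-H₀)·min{M-1, N}] and d = H(M+N) - H - N. Then 2λ̄ ≤ d, i.e., λ̄ ≤ d/2, with equality if and only if H = H₀ = 1. -/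
/-!
Since `H ≥ 1`, the dimension splits as `d = (M - 1) + (H₀ - 1)(M + N - 1) + (H - H₀)(M + N - 1)`,
which is `2λ̄` with both factors `M + N - 3` and `min (M - 1) N` raised to `M + N - 1`. Both are
strictly smaller than `M + N - 1` once `M ≥ 2`, so `2λ̄ ≤ d`, with equality exactly when both
coefficients `H₀ - 1` and `H - H₀` vanish.
-/

/-- The essential parameter dimension `d` of stochastic matrix factorization. -/
def essentialDim (M N H : ℕ) : ℕ := H * (M + N) - H - N

/-- Twice the upper bound `λ̄` of the RLCT. -/
def twiceRLCTBound (M N H H₀ : ℕ) : ℕ :=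
  (M - 1) + (H₀ - 1) * (M + N - 3) + (H - H₀) * min (M - 1) N

section

variable {M N H H₀ : ℕ}

theorem essentialDim_eq (hM : 1 ≤ M) (hH₀ : 1 ≤ H₀) (hH : H₀ ≤ H) :
    essentialDim M N H = (M - 1) + (H₀ - 1) * (M + N - 1) + (H - H₀) * (M + N - 1) := by
  obtain ⟨m, rfl⟩ := Nat.exists_eq_add_of_le' hM
  obtain ⟨h, rfl⟩ := Nat.exists_eq_add_of_le' hH₀
  obtain ⟨k, rfl⟩ := Nat.exists_eq_add_of_le' hH
  have hexpand : (k + (h + 1)) * (m + 1 + N)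
      = m + h * (m + N) + k * (m + N) + (k + (h + 1)) + N := by ring
  simp only [essentialDim, hexpand, Nat.add_sub_cancel, show m + 1 + N - 1 = m + N by omega]
  omega

theorem twiceRLCTBound_le_essentialDim (hM : 2 ≤ M) (hH₀ : 1 ≤ H₀) (hH : H₀ ≤ H) :
    twiceRLCTBound M N H H₀ ≤ essentialDim M N H := by
  rw [essentialDim_eq (by omega) hH₀ hH, twiceRLCTBound]
  gcongr <;> omega

theorem twiceRLCTBound_eq_essentialDim_iff (hM : 2 ≤ M) (hH₀ : 1 ≤ H₀) (hH : H₀ ≤ H) :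
    twiceRLCTBound M N H H₀ = essentialDim M N H ↔ H = 1 ∧ H₀ = 1 := by
  have hsub : M + N - 3 < M + N - 1 := by omega
  have hmin : min (M - 1) N < M + N - 1 := by omega
  rw [essentialDim_eq (by omega) hH₀ hH, twiceRLCTBound, add_assoc, add_assoc, add_right_inj,
    add_eq_add_iff_eq_and_eq (Nat.mul_le_mul_left _ hsub.le) (Nat.mul_le_mul_left _ hmin.le),
    mul_eq_mul_left_iff, mul_eq_mul_left_iff]
  simp only [hsub.ne, hmin.ne, false_or]
  omega

end

theorem rlct_bound_nontrivial_general (M N H H₀ : ℕ) (hM : 2 ≤ M)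
    (hH₀ : 1 ≤ H₀) (hH : H₀ ≤ H) :
    (M - 1) + (H₀ - 1) * (M + N - 3) + (H - H₀) * min (M - 1) N
      ≤ H * (M + N) - H - N ∧
    ((M - 1) + (H₀ - 1) * (M + N - 3) + (H - H₀) * min (M - 1) N
      = H * (M + N) - H - N ↔ H = 1 ∧ H₀ = 1) :=
  ⟨twiceRLCTBound_le_essentialDim hM hH₀ hH, twiceRLCTBound_eq_essentialDim_iff hM hH₀ hH⟩

theorem rlct_bound_nontrivial (M N H H₀ : ℕ) (hM : 2 ≤ M) (hN : 2 ≤ N)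
    (hH₀ : 1 ≤ H₀) (hH : H₀ ≤ H) :
    (M - 1) + (H₀ - 1) * (M + N - 3) + (H - H₀) * min (M - 1) N
      ≤ H * (M + N) - H - N ∧
    ((M - 1) + (H₀ - 1) * (M + N - 3) + (H - H₀) * min (M - 1) N
      = H * (M + N) - H - N ↔ H = 1 ∧ H₀ = 1) :=
  rlct_bound_nontrivial_general M N H H₀ hM hH₀ hH
end
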